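/- The circulant graph on 13 vertices with distance set {1,5} is a doubly saturated R(3,5)-good graph. -/

import Mathlib

/-- The cyclic distance ‖x‖ = min(x mod n, n − (x mod n)) for x ∈ ℤ/nℤ. -/
def cyclicDist (n : ℕ) (x : ZMod n) : ℕ := min x.val (n - x.val)

/-- The circulant graph on `ZMod n` with distance set `S`: `x ~ y` iff `‖x - y‖ ∈ S`. -/
def circ (n : ℕ) (S : Set ℕ) : SimpleGraph (ZMod n) :=
  SimpleGraph.fromRel (fun x y => cyclicDist n (x - y) ∈ S)

/-- `G` is `R(s,t)`-good: no clique of size `s` and no independent set of size `t`. -/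
def RGood {V : Type*} (s t : ℕ) (G : SimpleGraph V) : Prop :=
  G.CliqueFree s ∧ Gᶜ.CliqueFree t

/-- `G` is doubly saturated `R(s,t)`-good. -/
def DoublySaturated {V : Type*} (s t : ℕ) (G : SimpleGraph V) : Prop :=
  RGood s t G ∧
  (∀ u v : V, u ≠ v → ¬ G.Adj u v → ¬ (G ⊔ SimpleGraph.edge u v).CliqueFree s) ∧
  (∀ u v : V, G.Adj u v → ¬ ((G.deleteEdges {s(u, v)})ᶜ.CliqueFree t)) ∧
  G ≠ ⊤ ∧ Gᶜ ≠ ⊤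

/-!
Translations `x ↦ x + a` are automorphisms of `G = circ 13 {1, 5}`, so every clique or independent
set may be assumed to contain `0`. Then `G` is triangle-free because the neighbourhood
`{1, 5, 8, 12}` of `0` is independent, and `G` has no independent `5`-set because the
non-neighbourhood `{2, 3, 4, 6, 7, 9, 10, 11}` of `0` has no independent `4`-set (it is an
`8`-cycle whose two independent `4`-sets are each broken by a chord).

Adding a non-edge `uv` creates a triangle, since `u` and `v` always have a common neighbour.
Multiplication by `d ∈ {±1, ±5}` also preserves `G`, because it permutes `{±1, ±5}`; hence, for
an edge `uv` with `d = v - u`, scaling the independent set `{0, 1, 3, 7, 10}` of `G - 01` gives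
the independent set `{u, u + d, u + 3d, u + 7d, u + 10d}` of `G - uv`.
-/

lemma cyclicDist_neg (n : ℕ) (x : ZMod n) : cyclicDist n (-x) = cyclicDist n x := by
  rcases n with _ | n
  · simp [cyclicDist]
  · by_cases hx : x = 0
    · simp [hx]
    · simp only [cyclicDist, ZMod.neg_val, hx, if_false]
      have := ZMod.val_lt x
      omega

lemma circ_adj_iff (n : ℕ) (S : Set ℕ) (x y : ZMod n) :
    (circ n S).Adj x y ↔ x ≠ y ∧ cyclicDist n (x - y) ∈ S := by
  rw [circ, SimpleGraph.fromRel_adj, ← neg_sub x y, cyclicDist_neg, or_self]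

instance circ.decidableAdj (n : ℕ) (S : Set ℕ) [DecidablePred (· ∈ S)] :
    DecidableRel (circ n S).Adj :=
  fun x y => decidable_of_iff' _ (circ_adj_iff n S x y)

namespace SimpleGraph

variable {α : Type*}

lemma cliqueFreeOn_succ_of_forall_inter_neighborSet {G : SimpleGraph α} {s : Set α} {n : ℕ}
    (h : ∀ a ∈ s, G.CliqueFreeOn (s ∩ G.neighborSet a) n) : G.CliqueFreeOn s (n + 1) := by
  classical
  intro t hts ht
  obtain ⟨a, ha⟩ : t.Nonempty := Finset.card_pos.1 (by rw [ht.card_eq]; omega)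
  refine h a (hts ha) (fun b hb => ?_) (ht.erase_of_mem ha)
  obtain ⟨hba, hb⟩ := Finset.mem_erase.1 hb
  exact ⟨hts hb, ht.isClique ha hb hba.symm⟩

lemma not_cliqueFree_of_pairwise_adj {G : SimpleGraph α} {n : ℕ} (f : Fin n → α)
    (hf : Pairwise fun i j => G.Adj (f i) (f j)) : ¬G.CliqueFree n := by
  let e : (⊤ : SimpleGraph (Fin n)) ↪g G :=
    ⟨⟨f, fun i j hij => by_contra fun hne => (hf hne).ne hij⟩, fun {i j} =>
      ⟨fun h => (G.ne_of_adj h <| congrArg f ·), fun h => hf h⟩⟩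
  exact e.isContained.not_cliqueFree

lemma not_cliqueFree_three_sup_edge {G : SimpleGraph α} {u v w : α} (huv : u ≠ v)
    (hu : G.Adj u w) (hv : G.Adj v w) : ¬(G ⊔ edge u v).CliqueFree 3 := by
  classical
  intro h
  refine h {u, v, w} (is3Clique_triple_iff.2 ⟨?_, Or.inl hu, Or.inl hv⟩)
  exact Or.inr ((edge_adj ..).2 ⟨Or.inl ⟨rfl, rfl⟩, huv⟩)

def IsTranslationInvariant [AddGroup α] (G : SimpleGraph α) : Prop :=
  ∀ a x y : α, G.Adj (x + a) (y + a) ↔ G.Adj x y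

namespace IsTranslationInvariant

variable [AddGroup α] {G : SimpleGraph α}

lemma compl (hG : G.IsTranslationInvariant) : Gᶜ.IsTranslationInvariant := by
  intro a x y
  simp only [compl_adj, hG a, ne_eq, add_left_inj]

lemma compl_deleteEdges (hG : G.IsTranslationInvariant) (a u v x y : α) :
    (G.deleteEdges {s(u + a, v + a)})ᶜ.Adj (x + a) (y + a) ↔
      (G.deleteEdges {s(u, v)})ᶜ.Adj x y := by
  simp only [compl_adj, deleteEdges_adj, hG a, Set.mem_singleton_iff, Sym2.eq_iff,
    add_left_inj, ne_eq]

lemma adj_zero_sub_iff (hG : G.IsTranslationInvariant) (u v : α) :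
    G.Adj 0 (v - u) ↔ G.Adj u v := by
  rw [← hG u, zero_add, sub_add_cancel]

lemma cliqueFree_succ (hG : G.IsTranslationInvariant) {n : ℕ}
    (h : G.CliqueFreeOn (G.neighborSet 0) n) : G.CliqueFree (n + 1) := by
  classical
  intro s hs
  obtain ⟨a, ha⟩ : s.Nonempty := Finset.card_pos.1 (by rw [hs.card_eq]; omega)
  have hadj {b c : α} (h : G.Adj b c) : G.Adj (b - a) (c - a) := by
    simpa only [sub_eq_add_neg] using (hG (-a) b c).2 h
  have hsub : G.IsNClique n ((s.erase a).image (· - a)) := by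
    refine ⟨?_, ?_⟩
    · rintro _ hx _ hy hxy
      obtain ⟨b, hb, rfl⟩ := Finset.mem_image.1 hx
      obtain ⟨c, hc, rfl⟩ := Finset.mem_image.1 hy
      exact hadj (hs.isClique (Finset.mem_of_mem_erase hb) (Finset.mem_of_mem_erase hc)
        fun hbc => hxy (congrArg (· - a) hbc))
    · rw [Finset.card_image_of_injective _ (sub_left_injective), Finset.card_erase_of_mem ha,
        hs.card_eq, Nat.add_sub_cancel]
  refine h (fun x hx => ?_) hsub
  obtain ⟨b, hb, rfl⟩ := Finset.mem_image.1 hx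
  obtain ⟨hba, hb⟩ := Finset.mem_erase.1 hb
  simpa only [mem_neighborSet, sub_self] using hadj (hs.isClique ha hb hba.symm)

end IsTranslationInvariant

end SimpleGraph

open SimpleGraph

lemma circ_isTranslationInvariant (n : ℕ) (S : Set ℕ) : (circ n S).IsTranslationInvariant := by
  intro a x y
  simp only [circ_adj_iff, ne_eq, add_left_inj, add_sub_add_right_eq_sub]

lemma circ13_cliqueFree_three : (circ 13 {1, 5}).CliqueFree 3 := by
  refine (circ_isTranslationInvariant 13 _).cliqueFree_succ ?_
  simp only [cliqueFreeOn_two, Set.Pairwise, mem_neighborSet, Pi.compl_apply, compl_iff_not]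
  decide

set_option synthInstance.maxSize 2000 in
lemma circ13_compl_cliqueFree_five : (circ 13 {1, 5})ᶜ.CliqueFree 5 := by
  refine (circ_isTranslationInvariant 13 _).compl.cliqueFree_succ <|
    cliqueFreeOn_succ_of_forall_inter_neighborSet fun a _ =>
      cliqueFreeOn_succ_of_forall_inter_neighborSet fun b _ => ?_
  revert a b
  simp only [cliqueFreeOn_two, Set.Pairwise, Set.mem_inter_iff, mem_neighborSet, Pi.compl_apply,
    compl_iff_not]
  decide

lemma circ13_exists_common_neighbor {u v : ZMod 13} (huv : u ≠ v)
    (h : ¬(circ 13 {1, 5}).Adj u v) :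
    ∃ w, (circ 13 {1, 5}).Adj u w ∧ (circ 13 {1, 5}).Adj v w := by
  have hG := circ_isTranslationInvariant 13 {1, 5}
  have hzero : ∀ d : ZMod 13, d ≠ 0 → ¬(circ 13 {1, 5}).Adj 0 d →
      ∃ w, (circ 13 {1, 5}).Adj 0 w ∧ (circ 13 {1, 5}).Adj d w := by
    decide
  obtain ⟨w, h0, hd⟩ := hzero (v - u) (sub_ne_zero.2 huv.symm)
    (mt (hG.adj_zero_sub_iff u v).1 h)
  refine ⟨w + u, ?_, ?_⟩
  · simpa only [zero_add] using (hG u 0 w).2 h0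
  · simpa only [sub_add_cancel] using (hG u (v - u) w).2 hd

lemma circ13_not_compl_deleteEdges_cliqueFree_five {u v : ZMod 13} (h : (circ 13 {1, 5}).Adj u v) :
    ¬((circ 13 {1, 5}).deleteEdges {s(u, v)})ᶜ.CliqueFree 5 := by
  have hG := circ_isTranslationInvariant 13 {1, 5}
  have hzero : ∀ d : ZMod 13, (circ 13 {1, 5}).Adj 0 d → Pairwise fun i j : Fin 5 =>
      ((circ 13 {1, 5}).deleteEdges {s(0, d)})ᶜ.Adj (![0, 1, 3, 7, 10] i * d)
        (![0, 1, 3, 7, 10] j * d) := by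
    unfold Pairwise
    decide
  have hd := hzero (v - u) ((hG.adj_zero_sub_iff u v).2 h)
  refine not_cliqueFree_of_pairwise_adj (fun i => ![0, 1, 3, 7, 10] i * (v - u) + u)
    fun i j hij => ?_
  simpa only [zero_add, sub_add_cancel] using (hG.compl_deleteEdges u 0 (v - u) _ _).2 (hd hij)

theorem stmt_11 : DoublySaturated 3 5 (circ 13 {1, 5}) := by
  refine ⟨⟨circ13_cliqueFree_three, circ13_compl_cliqueFree_five⟩, fun u v huv h => ?_,
    fun u v h => circ13_not_compl_deleteEdges_cliqueFree_five h, fun h => ?_, fun h => ?_⟩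
  · obtain ⟨w, hu, hv⟩ := circ13_exists_common_neighbor huv h
    exact not_cliqueFree_three_sup_edge huv hu hv
  · have h02 : ¬(circ 13 {1, 5}).Adj 0 2 := by decide
    exact h02 (by rw [h]; decide)
  · have h01 : ¬(circ 13 {1, 5})ᶜ.Adj 0 1 := by decide
    exact h01 (by rw [h]; decide)
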